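/- arXiv:1105.6305 — 2 statements merged into one kernel-verified Lean document; each statement's English description precedes it below -/
import Mathlib

section
/- Let Γ be a simple graph on a finite vertex set V, let s, t ∈ V be distinct vertices not adjacent in Γ, and let Γ ∪ e be Γ with the edge e = (s, t) added. If ℓ is a maximal clique of Γ ∪ e containing both s and t, then there exist maximal cliques ℓ_s and ℓ_t of Γ with s ∈ ℓ_s, t ∈ ℓ_t, ℓ \ {t} ⊆ ℓ_s, ℓ \ {s} ⊆ ℓ_t, and ℓ_s ∩ ℓ_t = ℓ \ {s, t}. -/
/-!
Deleting `t`, resp. `s`, from `ℓ` leaves a clique of `Γ`; extend these to maximal cliques `ℓs`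
and `ℓt`. Since `s` and `t` are not adjacent in `Γ`, `t ∉ ℓs` and `s ∉ ℓt`. A common vertex `x` of
`ℓs` and `ℓt` is adjacent in `Γ` to every vertex of `ℓ \ {t}` (through `ℓs`) and to `t` (through
`ℓt`), so `insert x ℓ` is a clique of `Γ ∪ e`, and maximality of `ℓ` forces `x ∈ ℓ`.
-/

/-- A maximal clique of a simple graph: a clique not properly contained in any other clique. -/
def IsMaxClique {V : Type*} (G : SimpleGraph V) (c : Set V) : Prop :=
  G.IsClique c ∧ ∀ d : Set V, G.IsClique d → c ⊆ d → c = d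

namespace SimpleGraph

variable {V : Type*} {G : SimpleGraph V}

theorem IsClique.exists_isMaxClique_superset {c : Set V} (hc : G.IsClique c) :
    ∃ m, IsMaxClique G m ∧ c ⊆ m := by
  obtain ⟨m, hm, hcm⟩ := (G.isClique_iff_isChain_adj.1 hc).exists_maxChain
  exact ⟨m, ⟨G.isClique_iff_isChain_adj.2 hm.1,
    fun d hd hmd => hm.2 (G.isClique_iff_isChain_adj.1 hd) hmd⟩, hcm⟩

theorem adj_of_mem_inter_of_diff_subset {s t x : V} {c A B : Set V} (hst : s ≠ t)
    (hA : G.IsClique A) (hB : G.IsClique B) (hcA : c \ {t} ⊆ A) (hcB : c \ {s} ⊆ B)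
    (hxA : x ∈ A) (hxB : x ∈ B) : ∀ y ∈ c, x ≠ y → G.Adj x y := by
  intro y hy hxy
  by_cases hyt : y = t
  · subst hyt
    exact hB hxB (hcB ⟨hy, hst.symm⟩) hxy
  · exact hA hxA (hcA ⟨hy, hyt⟩) hxy

end SimpleGraph

theorem IsMaxClique.mem_of_isClique_insert {V : Type*} {G : SimpleGraph V} {c : Set V} {x : V}
    (hc : IsMaxClique G c) (hx : G.IsClique (insert x c)) : x ∈ c :=
  (hc.2 _ hx (Set.subset_insert x c)).symm ▸ Set.mem_insert x c

theorem statement_3_general {V : Type*} (Γ : SimpleGraph V) (s t : V) (hst : s ≠ t)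
    (hadj : ¬ Γ.Adj s t) (ℓ : Set V)
    (hmax : IsMaxClique (Γ ⊔ SimpleGraph.edge s t) ℓ) (hs : s ∈ ℓ) (ht : t ∈ ℓ) :
    ∃ ℓs ℓt : Set V, IsMaxClique Γ ℓs ∧ IsMaxClique Γ ℓt ∧ s ∈ ℓs ∧ t ∈ ℓt ∧
      ℓ \ {t} ⊆ ℓs ∧ ℓ \ {s} ⊆ ℓt ∧ ℓs ∩ ℓt = ℓ \ {s, t} := by
  have hℓ' : (Γ ⊔ SimpleGraph.edge t s).IsClique ℓ := SimpleGraph.edge_comm s t ▸ hmax.1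
  obtain ⟨ℓs, hℓs, hsubs⟩ := hℓ'.sdiff_of_sup_edge.exists_isMaxClique_superset
  obtain ⟨ℓt, hℓt, hsubt⟩ := hmax.1.sdiff_of_sup_edge.exists_isMaxClique_superset
  have hsℓs : s ∈ ℓs := hsubs ⟨hs, hst⟩
  have htℓt : t ∈ ℓt := hsubt ⟨ht, hst.symm⟩
  refine ⟨ℓs, ℓt, hℓs, hℓt, hsℓs, htℓt, hsubs, hsubt, ?_⟩
  apply subset_antisymm
  · rintro x ⟨hxs, hxt⟩
    have hxadj : ∀ y ∈ ℓ, x ≠ y → Γ.Adj x y :=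
      SimpleGraph.adj_of_mem_inter_of_diff_subset hst hℓs.1 hℓt.1 hsubs hsubt hxs hxt
    refine ⟨hmax.mem_of_isClique_insert ?_, ?_⟩
    · exact SimpleGraph.isClique_insert.2 ⟨hmax.1, fun y hy hxy => Or.inl (hxadj y hy hxy)⟩
    · rintro (rfl | rfl)
      · exact hadj (hℓt.1 hxt htℓt hst)
      · exact hadj (hℓs.1 hsℓs hxs hst)
  · intro x hx
    have hx' : x ∈ ℓ ∧ x ≠ s ∧ x ≠ t := by simpa using hx
    exact ⟨hsubs ⟨hx'.1, hx'.2.2⟩, hsubt ⟨hx'.1, hx'.2.1⟩⟩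

/-- If `ℓ` is a maximal clique of `Γ ∪ e` containing both `s` and `t`,
then there are maximal cliques `ℓs`, `ℓt` of `Γ` with `s ∈ ℓs`, `t ∈ ℓt`,
`ℓ \ {t} ⊆ ℓs`, `ℓ \ {s} ⊆ ℓt`, and `ℓs ∩ ℓt = ℓ \ {s, t}`. -/
theorem statement_3 {V : Type*} [Fintype V] (Γ : SimpleGraph V) (s t : V) (hst : s ≠ t)
    (hadj : ¬ Γ.Adj s t) (ℓ : Set V)
    (hmax : IsMaxClique (Γ ⊔ SimpleGraph.edge s t) ℓ) (hs : s ∈ ℓ) (ht : t ∈ ℓ) :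
    ∃ ℓs ℓt : Set V, IsMaxClique Γ ℓs ∧ IsMaxClique Γ ℓt ∧ s ∈ ℓs ∧ t ∈ ℓt ∧
      ℓ \ {t} ⊆ ℓs ∧ ℓ \ {s} ⊆ ℓt ∧ ℓs ∩ ℓt = ℓ \ {s, t} :=
  statement_3_general Γ s t hst hadj ℓ hmax hs ht
end

section
/- Let Γ be a simple graph on a finite vertex set V, let s, t ∈ V be distinct vertices not adjacent in Γ, and let Γ ∪ e be Γ with the edge e = (s, t) added. If ℓ is a maximal clique of Γ ∪ e containing both s and t, then there exist maximal cliques ℓ_s and ℓ_t of Γ with s ∈ ℓ_s and t ∈ ℓ_t such that ℓ = (ℓ_s ∩ ℓ_t) ∪ {s, t}. -/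
section

open SimpleGraph

variable {V : Type*} {G : SimpleGraph V} {c : Set V}

theorem isMaxClique_iff_isMaxChain : IsMaxClique G c ↔ IsMaxChain G.Adj c := by
  simp only [IsMaxClique, IsMaxChain, isClique_iff_isChain_adj]

theorem SimpleGraph.IsClique.exists_isMaxClique_superset_s4 (hc : G.IsClique c) :
    ∃ d, IsMaxClique G d ∧ c ⊆ d := by
  simp only [isMaxClique_iff_isMaxChain]
  exact (G.isClique_iff_isChain_adj.mp hc).exists_maxChain

theorem IsMaxClique.mem_of_forall_adj {x : V} (hc : IsMaxClique G c)
    (hx : ∀ y ∈ c, x ≠ y → G.Adj x y) : x ∈ c := by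
  rw [hc.2 _ (hc.1.insert hx) (Set.subset_insert x c)]
  exact Set.mem_insert x c

theorem SimpleGraph.IsClique.diff_singleton_of_sup_edge {s t : V}
    (hc : (G ⊔ edge s t).IsClique c) : G.IsClique (c \ {t}) := by
  intro u hu v hv huv
  refine (hc hu.1 hv.1 huv).resolve_right fun h => ?_
  rcases ((edge_adj s t u v).mp h).1 with ⟨-, rfl⟩ | ⟨rfl, -⟩
  exacts [hv.2 rfl, hu.2 rfl]

end

theorem statement_4_general {V : Type*} (Γ : SimpleGraph V) (s t : V) (hst : s ≠ t)
    (ℓ : Set V)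
    (hmax : IsMaxClique (Γ ⊔ SimpleGraph.edge s t) ℓ) (hs : s ∈ ℓ) (ht : t ∈ ℓ) :
    ∃ ℓs ℓt : Set V, IsMaxClique Γ ℓs ∧ IsMaxClique Γ ℓt ∧ s ∈ ℓs ∧ t ∈ ℓt ∧
      ℓ = (ℓs ∩ ℓt) ∪ {s, t} := by
  obtain ⟨ℓs, hℓs, hsub_s⟩ := hmax.1.diff_singleton_of_sup_edge.exists_isMaxClique_superset_s4
  have hmax' : IsMaxClique (Γ ⊔ SimpleGraph.edge t s) ℓ := SimpleGraph.edge_comm s t ▸ hmax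
  obtain ⟨ℓt, hℓt, hsub_t⟩ := hmax'.1.diff_singleton_of_sup_edge.exists_isMaxClique_superset_s4
  have htℓt : t ∈ ℓt := hsub_t ⟨ht, hst.symm⟩
  refine ⟨ℓs, ℓt, hℓs, hℓt, hsub_s ⟨hs, hst⟩, htℓt, Set.Subset.antisymm ?_ ?_⟩
  · intro x hx
    by_cases hxs : x = s
    · exact Or.inr (Or.inl hxs)
    by_cases hxt : x = t
    · exact Or.inr (Or.inr hxt)
    exact Or.inl ⟨hsub_s ⟨hx, hxt⟩, hsub_t ⟨hx, hxs⟩⟩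
  · rintro x (⟨hxs, hxt⟩ | rfl | rfl)
    · refine hmax.mem_of_forall_adj fun y hy hxy => Or.inl ?_
      rcases eq_or_ne y t with rfl | hyt
      · exact hℓt.1 hxt htℓt hxy
      · exact hℓs.1 hxs (hsub_s ⟨hy, hyt⟩) hxy
    exacts [hs, ht]

/-- If `ℓ` is a maximal clique of `Γ ∪ e` containing both `s` and `t`,
then there are maximal cliques `ℓs`, `ℓt` of `Γ` with `s ∈ ℓs`, `t ∈ ℓt` and
`ℓ = (ℓs ∩ ℓt) ∪ {s, t}`. -/
theorem statement_4 {V : Type*} [Fintype V] (Γ : SimpleGraph V) (s t : V) (hst : s ≠ t)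
    (hadj : ¬ Γ.Adj s t) (ℓ : Set V)
    (hmax : IsMaxClique (Γ ⊔ SimpleGraph.edge s t) ℓ) (hs : s ∈ ℓ) (ht : t ∈ ℓ) :
    ∃ ℓs ℓt : Set V, IsMaxClique Γ ℓs ∧ IsMaxClique Γ ℓt ∧ s ∈ ℓs ∧ t ∈ ℓt ∧
      ℓ = (ℓs ∩ ℓt) ∪ {s, t} :=
  statement_4_general Γ s t hst ℓ hmax hs ht
end
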